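/- For every integer b ≥ 1, one has |[2, 2, b, 2*b]| = 3b² − 2b − 2 and |[2, b, 2*b]| = 2b² − b − 1, where 2*b denotes b consecutive entries equal to 2 (so the chain [2, 2, b, 2*b] contracts to a singularity of type (1/(3b²−2b−2))(1, 2b²−b−1)). -/

import Mathlib

/-- Hirzebruch–Jung numerator: |[]| = 1, |[n]| = n,
|[n₁, n₂, …]| = n₁·|[n₂, …]| − |[n₃, …]|. -/
def hj : List ℤ → ℤ
  | [] => 1
  | [n] => n
  | n :: m :: l => n * hj (m :: l) - hj l

theorem hj_replicate_two : ∀ k : ℕ, hj (List.replicate k 2) = k + 1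
  | 0 => rfl
  | 1 => rfl
  | k + 2 => by
    rw [List.replicate_succ, List.replicate_succ, hj, ← List.replicate_succ,
      hj_replicate_two (k + 1), hj_replicate_two k]
    push_cast
    ring

theorem hj_cons_replicate_two (x : ℤ) : ∀ k : ℕ, hj (x :: List.replicate k 2) = x * (k + 1) - k
  | 0 => by simp [hj]
  | k + 1 => by
    rw [List.replicate_succ, hj, ← List.replicate_succ, hj_replicate_two, hj_replicate_two]
    push_cast
    ring

theorem hj_three_sing (b : ℤ) (hb : 1 ≤ b) :
    hj ([2, 2, b] ++ List.replicate b.toNat 2) = 3 * b ^ 2 - 2 * b - 2 ∧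
    hj ([2, b] ++ List.replicate b.toNat 2) = 2 * b ^ 2 - b - 1 := by
  lift b to ℕ using by omega
  have hb_chain : hj ((b : ℤ) :: List.replicate b 2) = (b : ℤ) ^ 2 := by
    rw [hj_cons_replicate_two]
    ring
  have h2b_chain : hj (2 :: (b : ℤ) :: List.replicate b 2) = 2 * (b : ℤ) ^ 2 - b - 1 := by
    rw [hj, hb_chain, hj_replicate_two]
    ring
  simp only [Int.toNat_natCast, List.cons_append, List.nil_append]
  refine ⟨?_, h2b_chain⟩
  rw [hj, h2b_chain, hb_chain]
  ring
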